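/- arXiv:1106.6262 — 3 statements merged into one kernel-verified Lean document; each statement's English description precedes it below -/
import Mathlib

section
/- Let r(x) = a_0 + a_1 x + ... + a_k x^k be a real polynomial of degree k ≥ 3 with all coefficients a_j > 0 and all roots real. Setting γ_j = a_{j−1}/a_j, one has γ_k − 4·γ_{k−1} + 3·γ_{k−2} ≥ 0. -/
/-! Positive coefficients and real roots make `P = a_k ∏ (X + b_i)` with all `b_i ≥ 0`, so that
`γ_{k-j+1} = e_j / e_{j-1}` for the elementary symmetric functions `e_j` of the `b_i`. Clearing
denominators, the claim becomes `4 e₂² ≤ e₁² e₂ + 3 e₁ e₃`. By Newton's identities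
`p₂ = e₁² - 2 e₂` and `p₃ = e₁³ - 3 e₁ e₂ + 3 e₃` for the power sums, this is exactly the
Cauchy–Schwarz inequality `p₂² ≤ p₁ p₃`. -/

open Polynomial

def Hyperbolic (P : Polynomial ℝ) : Prop :=
  ∀ z : ℂ, Polynomial.aeval z P = 0 → z.im = 0

namespace Multiset

section CommSemiring

variable {R : Type*} [CommSemiring R]

theorem esymm_cons_succ (a : R) (s : Multiset R) (n : ℕ) :
    (a ::ₘ s).esymm (n + 1) = s.esymm (n + 1) + a * s.esymm n := by
  simp only [esymm, powersetCard_cons, map_add, sum_add, map_map, Function.comp_def, prod_cons,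
    sum_map_mul_left]

theorem esymm_zero (s : Multiset R) : s.esymm 0 = 1 := by
  simp [esymm]

theorem esymm_one (s : Multiset R) : s.esymm 1 = s.sum := by
  simp [esymm, powersetCard_one]

@[simp]
theorem esymm_zero_succ (n : ℕ) : (0 : Multiset R).esymm (n + 1) = 0 := by
  simp [esymm, powersetCard_zero_right]

end CommSemiring

section CommRing

variable {R : Type*} [CommRing R]

theorem sum_map_sq_eq (s : Multiset R) :
    (s.map (· ^ 2)).sum = s.esymm 1 ^ 2 - 2 * s.esymm 2 := by
  induction s using Multiset.induction with
  | empty => simp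
  | cons a s ih =>
    simp only [map_cons, sum_cons, ih, esymm_cons_succ, esymm_one]
    ring

theorem sum_map_cube_eq (s : Multiset R) :
    (s.map (· ^ 3)).sum = s.esymm 1 ^ 3 - 3 * s.esymm 1 * s.esymm 2 + 3 * s.esymm 3 := by
  induction s using Multiset.induction with
  | empty => simp
  | cons a s ih =>
    simp only [map_cons, sum_cons, ih, esymm_cons_succ, esymm_one]
    ring

end CommRing

section Ordered

variable {R : Type*} [CommRing R] [LinearOrder R] [IsStrictOrderedRing R]

theorem sq_sum_map_sq_le_sum_mul_sum_map_cube (s : Multiset R) (hs : ∀ x ∈ s, 0 ≤ x) :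
    (s.map (· ^ 2)).sum ^ 2 ≤ s.sum * (s.map (· ^ 3)).sum := by
  rw [← map_univ_coe s, map_map, map_map]
  simp only [Function.comp_def, Finset.sum_map_val]
  exact Finset.sum_sq_le_sum_mul_sum_of_sq_le_mul _ (fun x _ => hs x coe_mem)
    (fun x _ => pow_nonneg (hs x coe_mem) 3) (fun _ _ => le_of_eq (by ring))

theorem four_mul_esymm_two_sq_le (s : Multiset R) (hs : ∀ x ∈ s, 0 ≤ x) :
    4 * s.esymm 2 ^ 2 ≤ s.esymm 1 ^ 2 * s.esymm 2 + 3 * s.esymm 1 * s.esymm 3 := by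
  have h := sq_sum_map_sq_le_sum_mul_sum_map_cube s hs
  rw [sum_map_sq_eq, sum_map_cube_eq, ← esymm_one] at h
  linear_combination h

end Ordered

theorem esymm_ratio_combination_nonneg {R : Type*} [Field R] [LinearOrder R]
    [IsStrictOrderedRing R] (s : Multiset R) (hs : ∀ x ∈ s, 0 ≤ x) (h1 : 0 < s.esymm 1)
    (h2 : 0 < s.esymm 2) :
    0 ≤ s.esymm 1 - 4 * (s.esymm 2 / s.esymm 1) + 3 * (s.esymm 3 / s.esymm 2) := by
  have key := s.four_mul_esymm_two_sq_le hs
  have : s.esymm 1 - 4 * (s.esymm 2 / s.esymm 1) + 3 * (s.esymm 3 / s.esymm 2) =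
      (s.esymm 1 ^ 2 * s.esymm 2 + 3 * s.esymm 1 * s.esymm 3 - 4 * s.esymm 2 ^ 2) /
        (s.esymm 1 * s.esymm 2) := by
    field_simp
    ring
  rw [this]
  exact div_nonneg (by linarith) (by positivity)

end Multiset

theorem Hyperbolic.splits {P : ℝ[X]} (hP : Hyperbolic P) : P.Splits := by
  refine Splits.of_splits_map (algebraMap ℝ ℂ) (IsAlgClosed.splits _) fun z hz => ?_
  have hz : aeval z P = 0 := by
    rw [aeval_def, ← eval_map]
    exact (mem_roots'.1 hz).2
  exact ⟨z.re, Complex.ext (by simp) (by simp [hP z hz])⟩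

namespace Polynomial

theorem eval_pos_of_coeff_zero_pos {R : Type*} [CommSemiring R] [LinearOrder R]
    [IsStrictOrderedRing R] {P : R[X]} (h0 : 0 < P.coeff 0) (hP : ∀ j, 0 ≤ P.coeff j) {x : R}
    (hx : 0 ≤ x) : 0 < P.eval x := by
  rw [eval_eq_sum_range, Finset.sum_range_succ']
  refine add_pos_of_nonneg_of_pos
    (Finset.sum_nonneg fun i _ => mul_nonneg (hP _) (pow_nonneg hx _)) (by simpa using h0)

theorem Splits.coeff_natDegree_sub {F : Type*} [Field F] {P : F[X]} (hP : P.Splits) {j : ℕ}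
    (hj : j ≤ P.natDegree) :
    P.coeff (P.natDegree - j) = P.leadingCoeff * (P.roots.map Neg.neg).esymm j := by
  rw [coeff_eq_esymm_roots_of_splits hP (Nat.sub_le _ _), Nat.sub_sub_self hj,
    Multiset.esymm_neg, mul_assoc]

end Polynomial

/-- For a real-rooted polynomial `r(x) = a_0 + ... + a_k x^k` of degree `k ≥ 3` with positive
coefficients, setting `γ_j = a_{j-1}/a_j`, one has `γ_k - 4 γ_{k-1} + 3 γ_{k-2} ≥ 0`. -/
theorem stmt1 (k : ℕ) (hk : 3 ≤ k) (P : Polynomial ℝ) (hdeg : P.natDegree = k)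
    (hpos : ∀ j ≤ k, 0 < P.coeff j) (hhyp : Hyperbolic P) :
    P.coeff (k - 1) / P.coeff k
      - 4 * (P.coeff (k - 2) / P.coeff (k - 1))
      + 3 * (P.coeff (k - 3) / P.coeff (k - 2)) ≥ 0 := by
  have hlead : 0 < P.leadingCoeff := by
    rw [leadingCoeff, hdeg]
    exact hpos k le_rfl
  have hP0 : P ≠ 0 := leadingCoeff_ne_zero.1 hlead.ne'
  have hnonneg : ∀ j, 0 ≤ P.coeff j := fun j =>
    if hj : j ≤ k then (hpos j hj).le
    else (coeff_eq_zero_of_natDegree_lt (by omega)).ge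
  set s := P.roots.map Neg.neg
  have hs : ∀ x ∈ s, 0 ≤ x := by
    intro x hx
    obtain ⟨r, hr, rfl⟩ := Multiset.mem_map.1 hx
    exact neg_nonneg.2 <| le_of_not_gt fun hr0 =>
      (eval_pos_of_coeff_zero_pos (hpos 0 k.zero_le) hnonneg hr0.le).ne' ((mem_roots hP0).1 hr)
  have hcoeff : ∀ j ≤ k, P.coeff (k - j) = P.leadingCoeff * s.esymm j := fun j hj =>
    hdeg ▸ hhyp.splits.coeff_natDegree_sub (hdeg ▸ hj)
  have hesymm : ∀ j ≤ k, 0 < s.esymm j := fun j hj =>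
    pos_of_mul_pos_right (hcoeff j hj ▸ hpos (k - j) (Nat.sub_le _ _)) hlead.le
  have hk0 : P.coeff k = P.leadingCoeff * s.esymm 0 := by
    rw [Multiset.esymm_zero, mul_one, leadingCoeff, hdeg]
  rw [hk0, hcoeff 1 (by omega), hcoeff 2 (by omega), hcoeff 3 hk, mul_div_mul_left _ _ hlead.ne',
    mul_div_mul_left _ _ hlead.ne', mul_div_mul_left _ _ hlead.ne', Multiset.esymm_zero, div_one,
    ge_iff_le]
  exact s.esymm_ratio_combination_nonneg hs (hesymm 1 (by omega)) (hesymm 2 (by omega))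
end

section
/- Let p(x) = a_0 + a_1 x + ... + a_{n−1} x^{n−1} be a section-hyperbolic polynomial of degree n−1 (n ≥ 2). Then the set { A > 0 : the polynomial p(x) + A x^n has all of its complex roots real } is nonempty and has a greatest element. -/
open Polynomial

/-- The `i`-th section `a_0 + a_1 x + ... + a_i x^i` of the coefficient sequence `a`. -/
noncomputable def sect (a : ℕ → ℝ) (i : ℕ) : Polynomial ℝ :=
  ∑ j ∈ Finset.range (i + 1), Polynomial.C (a j) * Polynomial.X ^ j

/-- A polynomial `a_0 + ... + a_n x^n` with all coefficients positive is section-hyperbolic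
if each of its sections of degree `1,...,n` is hyperbolic. -/
def SectionHyperbolic (a : ℕ → ℝ) (n : ℕ) : Prop :=
  (∀ i ≤ n, 0 < a i) ∧ ∀ i, 1 ≤ i → i ≤ n → Hyperbolic (sect a i)

/-!
Reversing coefficients, `p(x) + A xⁿ` is real-rooted iff `P + A` is, where
`P(x) = xⁿ p(1/x) = x Q(x)` and `Q` is the reversal of `p`.

For a real-rooted `f` with positive leading coefficient, Rolle's theorem (with multiplicities,
on half-lines) shows that at a critical point `x` where `f(x) ≠ 0` the sign of `f(x)` is
`-(-1)^k`, `k` being the number of critical points to the right of `x`. Conversely, if `f'` has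
`deg f - 1` simple real roots, these sign conditions produce `deg f` real roots of `f` by the
intermediate value theorem between consecutive critical points. So `P + c` is real-rooted iff
`P(y) + c ≤ 0` at the critical points `y` with `k` even and `≥ 0` at the others, and the
greatest such `c` is the minimum of `-P(y)` over the former.

That minimum is positive and the critical points of `P` are simple. Indeed `P(y) ≤ 0` at the
critical points with `k` even by the sign rule, and if `P(y) = 0` at a critical point then
`y < 0` is a double root of `Q` and a critical point of `Q - Q(0)`, which is `x` times the
reversal of the next lower section and hence real-rooted; the sign rule for `Q - Q(0)` at `y`
then makes `y` a simple critical point of `P` with `k` odd.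
-/

namespace Multiset

variable {α : Type*} [LinearOrder α]

theorem card_filter_ge_eq_count_add (M : Multiset α) (x : α) :
    card (M.filter (x ≤ ·)) = M.count x + card (M.filter (x < ·)) := by
  induction M using Multiset.induction_on with
  | empty => simp
  | cons a M ih =>
    rcases lt_trichotomy x a with h | rfl | h
    · simp [h, h.le, h.ne, ih]; omega
    · simp [ih]; omega
    · simp [not_le.2 h, not_lt.2 h.le, h.ne', ih]

theorem card_filter_le_eq_add_count (M : Multiset α) (x : α) :
    card (M.filter (· ≤ x)) = card (M.filter (· < x)) + M.count x := by
  rw [add_comm]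
  exact card_filter_ge_eq_count_add (α := αᵒᵈ) M x

theorem card_eq_filter_lt_add_count_add_filter_gt (M : Multiset α) (x : α) :
    card M = card (M.filter (· < x)) + M.count x + card (M.filter (x < ·)) := by
  rw [add_assoc, ← card_filter_ge_eq_count_add, ← card_add]
  conv_lhs => rw [← filter_add_not (· < x) M]
  simp only [not_lt]

theorem card_filter_gt_eq_of_lt (M : Multiset α) {x s : α} (hxs : x < s) :
    card (M.filter (x < ·)) =
      card (M.filter (fun y ↦ x < y ∧ y < s)) + M.count s + card (M.filter (s < ·)) := by
  rw [card_eq_filter_lt_add_count_add_filter_gt (M.filter (x < ·)) s, filter_filter,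
    filter_filter, count_filter_of_pos hxs]
  have h₁ : M.filter (fun y ↦ y < s ∧ x < y) = M.filter (fun y ↦ x < y ∧ y < s) :=
    filter_congr fun y _ ↦ And.comm
  have h₂ : M.filter (fun y ↦ s < y ∧ x < y) = M.filter (s < ·) :=
    filter_congr fun y _ ↦ ⟨And.left, fun h ↦ ⟨h, hxs.trans h⟩⟩
  rw [h₁, h₂]

theorem exists_least_gt {M : Multiset α} {x : α} (h : ∃ y ∈ M, x < y) :
    ∃ s ∈ M, x < s ∧ ∀ y ∈ M, x < y → s ≤ y := by
  classical
  obtain ⟨s, hs, hmin⟩ := (M.filter (x < ·)).toFinset.exists_min_image id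
    (by simpa [Finset.Nonempty] using h)
  simp only [mem_toFinset, mem_filter, id] at hs hmin
  exact ⟨s, hs.1, hs.2, fun y hy hxy ↦ hmin y ⟨hy, hxy⟩⟩

theorem neg_one_pow_mul_prod_sub_pos {R : Type*} [CommRing R] [LinearOrder R]
    [IsStrictOrderedRing R] {M : Multiset R} {x : R} (hx : x ∉ M) :
    0 < (-1) ^ card (M.filter (x < ·)) * (M.map (x - ·)).prod := by
  induction M using Multiset.induction_on with
  | empty => simp
  | cons a M ih =>
    rw [mem_cons, not_or] at hx
    have ih := ih hx.2
    rcases lt_or_gt_of_ne hx.1 with h | h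
    · rw [filter_cons_of_pos (p := (x < ·)) M h, card_cons, map_cons, prod_cons, pow_succ]
      nlinarith [sub_neg.2 h]
    · rw [filter_cons_of_neg (p := (x < ·)) M h.not_gt, map_cons, prod_cons, mul_left_comm]
      exact mul_pos (sub_pos.2 h) ih

end Multiset

namespace Polynomial

variable {f : ℝ[X]} {x : ℝ}

theorem card_roots_filter_le_derivative (p : ℝ[X]) {P : ℝ → Prop} [DecidablePred P]
    (hP : {y | P y}.OrdConnected) :
    Multiset.card (p.roots.filter P) ≤ Multiset.card (p.derivative.roots.filter P) + 1 := by
  classical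
  rcases eq_or_ne (derivative p) 0 with hp' | hp'
  · rw [eq_C_of_derivative_eq_zero hp']
    simp
  have hp : p ≠ 0 := ne_of_apply_ne derivative (by rwa [derivative_zero])
  set R := p.roots.toFinset.filter P
  set D := p.derivative.roots.toFinset.filter P
  have hRD : R.card ≤ (D \ R).card + 1 := by
    refine Finset.card_le_sdiff_of_interleaved fun x hx y hy hxy _ ↦ ?_
    simp only [R, Finset.mem_filter, Multiset.mem_toFinset, mem_roots hp] at hx hy
    obtain ⟨z, hz, hz'⟩ := exists_deriv_eq_zero hxy p.continuousOn (hx.1.trans hy.1.symm)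
    refine ⟨z, ?_, hz⟩
    simp only [D, Finset.mem_filter, Multiset.mem_toFinset, mem_roots hp', IsRoot, ← p.deriv]
    exact ⟨hz', hP.out hx.2 hy.2 (Set.Ioo_subset_Icc_self hz)⟩
  have hcount_pos : ∀ {q : ℝ[X]} {x}, x ∈ q.roots.toFinset.filter P →
      1 ≤ q.roots.count x :=
    fun hx ↦ Multiset.one_le_count_iff_mem.2 (Multiset.mem_toFinset.1 (Finset.mem_filter.1 hx).1)
  calc Multiset.card (p.roots.filter P)
      = ∑ x ∈ R, p.roots.count x := by
        rw [← Multiset.toFinset_sum_count_eq, Multiset.toFinset_filter]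
        exact Finset.sum_congr rfl fun x hx ↦
          Multiset.count_filter_of_pos (Finset.mem_filter.1 hx).2
    _ = ∑ x ∈ R, (p.roots.count x - 1) + R.card := by
        rw [Finset.card_eq_sum_ones, ← Finset.sum_add_distrib]
        exact Finset.sum_congr rfl fun x hx ↦ (Nat.sub_add_cancel (hcount_pos hx)).symm
    _ ≤ ∑ x ∈ R, p.derivative.roots.count x +
          (∑ x ∈ D \ R, p.derivative.roots.count x + 1) := by
        gcongr with x hx
        · rw [count_roots, count_roots]
          exact rootMultiplicity_sub_one_le_derivative_rootMultiplicity _ _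
        · refine hRD.trans (Nat.add_le_add_right ?_ 1)
          rw [Finset.card_eq_sum_ones]
          gcongr with x hx
          exact hcount_pos (Finset.mem_sdiff.1 hx).1
    _ = Multiset.card (p.derivative.roots.filter P) + 1 := by
        rw [← add_assoc, ← Finset.sum_union Finset.disjoint_sdiff,
          Finset.union_sdiff_self_eq_union, ← Finset.sum_subset Finset.subset_union_right,
          ← Multiset.toFinset_sum_count_eq, Multiset.toFinset_filter]
        · exact congrArg (· + 1) (Finset.sum_congr rfl fun x hx ↦
            (Multiset.count_filter_of_pos (Finset.mem_filter.1 hx).2).symm)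
        · intro x hxRD hxD
          have hPx : P x := by
            rcases Finset.mem_union.1 hxRD with h | h <;> exact (Finset.mem_filter.1 h).2
          exact Multiset.count_eq_zero.2 fun hx ↦
            hxD (Finset.mem_filter.2 ⟨Multiset.mem_toFinset.2 hx, hPx⟩)

theorem card_roots_derivative_of_card_roots_eq (hf : Multiset.card f.roots = f.natDegree) :
    Multiset.card f.derivative.roots = f.natDegree - 1 := by
  have := card_roots_le_derivative f
  have := (card_roots' f.derivative).trans (natDegree_derivative_le f)
  omega

theorem count_roots_eq_count_roots_derivative_add_one (hf : f ≠ 0) (hx : f.IsRoot x) :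
    f.roots.count x = f.derivative.roots.count x + 1 := by
  rw [count_roots, count_roots, derivative_rootMultiplicity_of_root hx,
    Nat.sub_add_cancel ((rootMultiplicity_pos hf).2 hx)]

theorem card_roots_filter_pos (hf : f ≠ 0) {P : ℝ → Prop} [DecidablePred P] {c : ℝ}
    (hc : f.IsRoot c) (hPc : P c) : 0 < Multiset.card (f.roots.filter P) :=
  Multiset.card_pos_iff_exists_mem.2 ⟨c, Multiset.mem_filter.2 ⟨(mem_roots hf).2 hc, hPc⟩⟩

noncomputable def numRootsAbove (f : ℝ[X]) (x : ℝ) : ℕ :=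
  Multiset.card (f.roots.filter (x < ·))

theorem numRootsAbove_derivative_of_isRoot (hf : Multiset.card f.roots = f.natDegree)
    (hfx : f.IsRoot x) : numRootsAbove f.derivative x = numRootsAbove f x := by
  rcases eq_or_ne f 0 with rfl | hf₀
  · simp [numRootsAbove]
  have hC := count_roots_eq_count_roots_derivative_add_one hf₀ hfx
  have htot := f.roots.card_eq_filter_lt_add_count_add_filter_gt x
  have htot' := f.derivative.roots.card_eq_filter_lt_add_count_add_filter_gt x
  have hcard' := card_roots_derivative_of_card_roots_eq hf
  have hAbove := card_roots_filter_le_derivative f (P := (x ≤ ·)) Set.ordConnected_Ici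
  have hBelow := card_roots_filter_le_derivative f (P := (· ≤ x)) Set.ordConnected_Iic
  rw [Multiset.card_filter_ge_eq_count_add, Multiset.card_filter_ge_eq_count_add] at hAbove
  rw [Multiset.card_filter_le_eq_add_count, Multiset.card_filter_le_eq_add_count] at hBelow
  unfold numRootsAbove
  omega

theorem count_roots_derivative_eq_one_and_numRootsAbove_eq
    (hf : Multiset.card f.roots = f.natDegree) (hdeg : 0 < f.natDegree)
    (hx : f.derivative.IsRoot x) (hfx : ¬ f.IsRoot x) :
    f.derivative.roots.count x = 1 ∧ numRootsAbove f x = numRootsAbove f.derivative x + 1 := by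
  have hf' : f.derivative ≠ 0 := fun h ↦ hdeg.ne' (derivative_eq_zero.1 h)
  have hC' : 1 ≤ f.derivative.roots.count x :=
    Multiset.one_le_count_iff_mem.2 ((mem_roots hf').2 hx)
  have hC : f.roots.count x = 0 := Multiset.count_eq_zero.2 (hfx <| isRoot_of_mem_roots ·)
  have htot := f.roots.card_eq_filter_lt_add_count_add_filter_gt x
  have htot' := f.derivative.roots.card_eq_filter_lt_add_count_add_filter_gt x
  have hcard' := card_roots_derivative_of_card_roots_eq hf
  have hAbove := card_roots_filter_le_derivative f (P := (x < ·)) Set.ordConnected_Ioi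
  have hBelow := card_roots_filter_le_derivative f (P := (· < x)) Set.ordConnected_Iio
  unfold numRootsAbove
  omega

theorem neg_one_pow_numRootsAbove_mul_eval_pos (hf : Multiset.card f.roots = f.natDegree)
    (hlc : 0 < f.leadingCoeff) (hfx : ¬ f.IsRoot x) :
    0 < (-1) ^ numRootsAbove f x * f.eval x := by
  have heval : f.eval x = f.leadingCoeff * (f.roots.map (x - ·)).prod := by
    conv_lhs => rw [← C_leadingCoeff_mul_prod_multiset_X_sub_C hf]
    simp [eval_multiset_prod, Multiset.map_map]
  rw [heval, mul_left_comm]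
  exact mul_pos hlc (Multiset.neg_one_pow_mul_prod_sub_pos (hfx <| isRoot_of_mem_roots ·))

theorem neg_one_pow_numRootsAbove_derivative_mul_eval_nonpos
    (hf : Multiset.card f.roots = f.natDegree) (hlc : 0 < f.leadingCoeff)
    (hdeg : 0 < f.natDegree) (hx : f.derivative.IsRoot x) :
    (-1) ^ numRootsAbove f.derivative x * f.eval x ≤ 0 := by
  by_cases hfx : f.IsRoot x
  · simp [hfx.eq_zero]
  have hpos := neg_one_pow_numRootsAbove_mul_eval_pos hf hlc hfx
  rw [(count_roots_derivative_eq_one_and_numRootsAbove_eq hf hdeg hx hfx).2, pow_succ] at hpos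
  linarith

theorem exists_isRoot_of_mul_eval_neg {a b : ℝ} (hab : a < b) (h : f.eval a * f.eval b < 0) :
    ∃ c, a < c ∧ c < b ∧ f.IsRoot c := by
  rcases lt_or_gt_of_ne (left_ne_zero_of_mul h.ne) with ha | ha
  · obtain ⟨c, hc, hc₀⟩ := intermediate_value_Ioo hab.le f.continuousOn
      (Set.mem_Ioo.2 ⟨ha, by nlinarith⟩)
    exact ⟨c, hc.1, hc.2, hc₀⟩
  · obtain ⟨c, hc, hc₀⟩ := intermediate_value_Ioo' hab.le f.continuousOn
      (Set.mem_Ioo.2 ⟨by nlinarith, ha⟩)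
    exact ⟨c, hc.1, hc.2, hc₀⟩

theorem numRootsAbove_pos_of_eval_neg (hlc : 0 < f.leadingCoeff) (hdeg : 0 < f.natDegree)
    (hx : f.eval x < 0) : 0 < numRootsAbove f x := by
  obtain ⟨y, hy, hxy⟩ := ((f.tendsto_atTop_of_leadingCoeff_nonneg
    (natDegree_pos_iff_degree_pos.1 hdeg) hlc.le).eventually_gt_atTop 0 |>.and
    (Filter.eventually_gt_atTop x)).exists
  obtain ⟨c, hxc, -, hc⟩ := exists_isRoot_of_mul_eval_neg hxy (by nlinarith)
  exact card_roots_filter_pos (leadingCoeff_ne_zero.1 hlc.ne') hc hxc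

open Filter Asymptotics in
theorem card_roots_filter_lt_pos_of_neg_one_pow_mul_eval_neg (hlc : 0 < f.leadingCoeff)
    (hdeg : 0 < f.natDegree) (hx : (-1) ^ f.natDegree * f.eval x < 0) :
    0 < Multiset.card (f.roots.filter (· < x)) := by
  have hequiv : (fun t ↦ (-1) ^ f.natDegree * f.eval t) ~[atBot]
      fun t ↦ f.leadingCoeff * (-t) ^ f.natDegree := by
    refine (IsEquivalent.refl.mul f.isEquivalent_atBot_lead).congr_right ?_
    exact Eventually.of_forall fun t ↦ by simp only [Pi.mul_apply, neg_pow t]; ring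
  have hlim : Tendsto (fun t ↦ f.leadingCoeff * (-t) ^ f.natDegree) atBot atTop :=
    ((tendsto_pow_atTop hdeg.ne').comp tendsto_neg_atBot_atTop).const_mul_atTop hlc
  obtain ⟨t, ht, htx⟩ :=
    ((hequiv.symm.tendsto_atTop hlim).eventually_gt_atTop 0 |>.and (eventually_lt_atBot x)).exists
  have hunit := pow_mul_pow_eq_one f.natDegree (by norm_num : (-1 : ℝ) * -1 = 1)
  obtain ⟨c, -, hcx, hc⟩ := exists_isRoot_of_mul_eval_neg htx (by nlinarith)
  exact card_roots_filter_pos (leadingCoeff_ne_zero.1 hlc.ne') hc hcx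

theorem numRootsAbove_derivative_le_of_forall_sign (hlc : 0 < f.leadingCoeff)
    (hdeg : 0 < f.natDegree) (hnodup : f.derivative.roots.Nodup)
    (hsign : ∀ y, f.derivative.IsRoot y →
      (-1) ^ numRootsAbove f.derivative y * f.eval y ≤ 0)
    (hx : f.derivative.IsRoot x) :
    (f.IsRoot x → numRootsAbove f.derivative x ≤ numRootsAbove f x) ∧
      (¬ f.IsRoot x → numRootsAbove f.derivative x < numRootsAbove f x) := by
  have hf : f ≠ 0 := leadingCoeff_ne_zero.1 hlc.ne'
  have hsign_lt : ∀ y, f.derivative.IsRoot y → ¬ f.IsRoot y →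
      (-1) ^ numRootsAbove f.derivative y * f.eval y < 0 := fun y hy hfy ↦
    (hsign y hy).lt_of_ne (mul_ne_zero (pow_ne_zero _ (by norm_num)) hfy)
  induction h : numRootsAbove f.derivative x using Nat.strong_induction_on generalizing x with
  | _ k ih =>
  by_cases hnext : ∃ y ∈ f.derivative.roots, x < y
  · obtain ⟨s, hs, hxs, hmin⟩ := Multiset.exists_least_gt hnext
    have hs' : f.derivative.IsRoot s := isRoot_of_mem_roots hs
    have hgap : f.derivative.roots.filter (fun y ↦ x < y ∧ y < s) = 0 :=
      Multiset.filter_eq_nil.2 fun y hy hxy ↦ (hmin y hy hxy.1).not_gt hxy.2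
    have hk : numRootsAbove f.derivative x = numRootsAbove f.derivative s + 1 := by
      rw [numRootsAbove, Multiset.card_filter_gt_eq_of_lt _ hxs, hgap,
        Multiset.count_eq_one_of_mem hnodup hs, Multiset.card_zero, zero_add, add_comm]
      rfl
    have hsplit : numRootsAbove f x = Multiset.card (f.roots.filter (fun y ↦ x < y ∧ y < s)) +
        f.roots.count s + numRootsAbove f s :=
      Multiset.card_filter_gt_eq_of_lt _ hxs
    obtain ⟨ih_root, ih_not_root⟩ := ih _ (by omega) hs' rfl
    by_cases hfs : f.IsRoot s
    · have hmult := count_roots_eq_count_roots_derivative_add_one hf hfs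
      rw [Multiset.count_eq_one_of_mem hnodup hs] at hmult
      have := ih_root hfs
      constructor <;> intro <;> omega
    · have := ih_not_root hfs
      refine ⟨fun _ ↦ by omega, fun hfx ↦ ?_⟩
      -- consecutive simple critical points: the signs of `f` at `x` and `s` are opposite
      have hx_sign := hsign_lt x hx hfx
      have hs_sign := hsign_lt s hs' hfs
      rw [hk, pow_succ] at hx_sign
      have hunit := pow_mul_pow_eq_one (numRootsAbove f.derivative s)
        (by norm_num : (-1 : ℝ) * -1 = 1)
      obtain ⟨c, hxc, hcs, hc⟩ := exists_isRoot_of_mul_eval_neg hxs (by nlinarith)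
      have := card_roots_filter_pos hf (P := fun y ↦ x < y ∧ y < s) hc ⟨hxc, hcs⟩
      omega
  · simp only [not_exists, not_and, not_lt] at hnext
    have hk : numRootsAbove f.derivative x = 0 :=
      Multiset.card_eq_zero.2 (Multiset.filter_eq_nil.2 fun y hy hxy ↦ (hnext y hy).not_gt hxy)
    refine ⟨fun _ ↦ by omega, fun hfx ↦ ?_⟩
    have := numRootsAbove_pos_of_eval_neg hlc hdeg (by simpa [hk] using hsign_lt x hx hfx)
    omega

theorem card_roots_eq_natDegree_of_forall_sign (hlc : 0 < f.leadingCoeff)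
    (hdeg : 2 ≤ f.natDegree) (hcard : Multiset.card f.derivative.roots = f.natDegree - 1)
    (hnodup : f.derivative.roots.Nodup)
    (hsign : ∀ y, f.derivative.IsRoot y →
      (-1) ^ numRootsAbove f.derivative y * f.eval y ≤ 0) :
    Multiset.card f.roots = f.natDegree := by
  classical
  have hf : f ≠ 0 := leadingCoeff_ne_zero.1 hlc.ne'
  obtain ⟨s, hs, hmin⟩ := f.derivative.roots.toFinset.exists_min_image id
    (Multiset.toFinset_nonempty.2 fun h ↦ by simp [h] at hcard; omega)
  simp only [Multiset.mem_toFinset, id] at hs hmin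
  have hs' : f.derivative.IsRoot s := isRoot_of_mem_roots hs
  have hbelow : f.derivative.roots.filter (· < s) = 0 :=
    Multiset.filter_eq_nil.2 fun y hy hys ↦ (hmin y hy).not_gt hys
  have hk : numRootsAbove f.derivative s + 2 = f.natDegree := by
    have htot := f.derivative.roots.card_eq_filter_lt_add_count_add_filter_gt s
    rw [hbelow, Multiset.count_eq_one_of_mem hnodup hs, hcard, Multiset.card_zero] at htot
    unfold numRootsAbove
    omega
  have htot := f.roots.card_eq_filter_lt_add_count_add_filter_gt s
  have hle := card_roots' f
  obtain ⟨h_root, h_not_root⟩ :=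
    numRootsAbove_derivative_le_of_forall_sign hlc (by omega) hnodup hsign hs'
  unfold numRootsAbove at hk h_root h_not_root
  by_cases hfs : f.IsRoot s
  · have hmult := count_roots_eq_count_roots_derivative_add_one hf hfs
    rw [Multiset.count_eq_one_of_mem hnodup hs] at hmult
    have := h_root hfs
    omega
  · have := h_not_root hfs
    have hsign_s : (-1) ^ f.natDegree * f.eval s < 0 := by
      have h := (hsign s hs').lt_of_ne (mul_ne_zero (pow_ne_zero _ (by norm_num)) hfs)
      unfold numRootsAbove at h
      rwa [← hk, pow_add, neg_one_sq, mul_one]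
    have := card_roots_filter_lt_pos_of_neg_one_pow_mul_eval_neg hlc (by omega) hsign_s
    omega

theorem exists_pos_isGreatest_card_roots_add_C (hf : Multiset.card f.roots = f.natDegree)
    (hlc : 0 < f.leadingCoeff) (hdeg : 2 ≤ f.natDegree) (hnodup : f.derivative.roots.Nodup)
    (hmin : ∀ x, f.derivative.IsRoot x → Even (numRootsAbove f.derivative x) → f.eval x < 0) :
    ∃ A, 0 < A ∧ IsGreatest {c | Multiset.card (f + C c).roots = (f + C c).natDegree} A := by
  classical
  have hcard' := card_roots_derivative_of_card_roots_eq hf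
  have hf' : f.derivative ≠ 0 := fun h ↦ by rw [derivative_eq_zero] at h; omega
  have hshift : ∀ c, (f + C c).natDegree = f.natDegree ∧
      (f + C c).leadingCoeff = f.leadingCoeff ∧ derivative (f + C c) = derivative f := by
    intro c
    refine ⟨natDegree_add_C, ?_, by simp⟩
    rw [leadingCoeff, natDegree_add_C, coeff_add, coeff_C, if_neg (by omega), add_zero]
    rfl
  -- the critical points where a real-rooted `f + C c` must be nonpositive
  set F := f.derivative.roots.toFinset.filter (fun x ↦ Even (numRootsAbove f.derivative x))
  have hmemF : ∀ {x}, x ∈ F ↔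
      f.derivative.IsRoot x ∧ Even (numRootsAbove f.derivative x) := by
    simp [F, mem_roots hf']
  have hF : F.Nonempty := by
    obtain ⟨x, hx, hmax⟩ := f.derivative.roots.toFinset.exists_max_image id
      (Multiset.toFinset_nonempty.2 fun h ↦ by rw [h] at hcard'; simp at hcard'; omega)
    have hx₀ : numRootsAbove f.derivative x = 0 :=
      Multiset.card_eq_zero.2 (Multiset.filter_eq_nil.2 fun y hy hxy ↦
        (hmax y (Multiset.mem_toFinset.2 hy)).not_gt hxy)
    exact ⟨x, Finset.mem_filter.2 ⟨hx, hx₀ ▸ Even.zero⟩⟩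
  set A := F.inf' hF (- f.eval ·)
  have hA : 0 < A := (Finset.lt_inf'_iff hF).2 fun x hx ↦
    neg_pos.2 (hmin x (hmemF.1 hx).1 (hmemF.1 hx).2)
  refine ⟨A, hA, ?_, fun c hc ↦ Finset.le_inf' hF _ fun x hx ↦ ?_⟩
  · obtain ⟨hdeg', hlc', hder⟩ := hshift A
    refine card_roots_eq_natDegree_of_forall_sign (hlc' ▸ hlc) (by omega)
      (by rw [hder, hdeg', hcard']) (hder ▸ hnodup) fun y hy ↦ ?_
    rw [hder] at hy ⊢
    rw [eval_add, eval_C]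
    rcases Nat.even_or_odd (numRootsAbove f.derivative y) with he | ho
    · have := Finset.inf'_le (- f.eval ·) (hmemF.2 ⟨hy, he⟩)
      rw [he.neg_one_pow, one_mul]
      linarith
    · have := neg_one_pow_numRootsAbove_derivative_mul_eval_nonpos hf hlc (by omega) hy
      rw [ho.neg_one_pow] at this ⊢
      linarith
  · obtain ⟨hdeg', hlc', hder⟩ := hshift c
    have := neg_one_pow_numRootsAbove_derivative_mul_eval_nonpos hc (hlc'.symm ▸ hlc) (by omega)
      (hder ▸ (hmemF.1 hx).1)
    rw [hder, (hmemF.1 hx).2.neg_one_pow, one_mul, eval_add, eval_C] at this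
    linarith

variable {Q : ℝ[X]}

theorem card_roots_X_mul_eq_natDegree (hQ : Multiset.card Q.roots = Q.natDegree) :
    Multiset.card (X * Q).roots = (X * Q).natDegree := by
  rcases eq_or_ne Q 0 with rfl | hQ0
  · simp
  rw [roots_mul (mul_ne_zero X_ne_zero hQ0), roots_X, Multiset.card_add, Multiset.card_singleton,
    natDegree_X_mul hQ0, hQ, add_comm]

theorem count_roots_derivative_X_mul_eq_one_and_odd
    (hQ : Multiset.card Q.roots = Q.natDegree)
    (hR : Multiset.card (Q - C (Q.eval 0)).roots = (Q - C (Q.eval 0)).natDegree)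
    (hlc : 0 < Q.leadingCoeff) (hdeg : 0 < Q.natDegree) (hpos : ∀ x, 0 ≤ x → 0 < Q.eval x)
    {x : ℝ} (hx : (X * Q).derivative.IsRoot x) (hPx : (X * Q).IsRoot x) :
    (X * Q).derivative.roots.count x = 1 ∧ Odd (numRootsAbove (X * Q).derivative x) := by
  have hQ0 : Q ≠ 0 := leadingCoeff_ne_zero.1 hlc.ne'
  have hP0 : X * Q ≠ 0 := mul_ne_zero X_ne_zero hQ0
  have hP' : (X * Q).derivative = Q + X * Q.derivative := by
    rw [derivative_mul, derivative_X, one_mul]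
  have hx0 : x ≠ 0 := by
    rintro rfl
    simp [hP', IsRoot, (hpos 0 le_rfl).ne'] at hx
  have hQx : Q.IsRoot x := by simpa [IsRoot, hx0] using hPx
  have hxneg : x < 0 := not_le.1 fun h ↦ (hpos x h).ne' hQx
  have hQ'x : Q.derivative.IsRoot x := by
    simpa [hP', IsRoot, hQx.eq_zero, hx0] using hx
  -- `R = Q - Q(0)` has the same critical points as `Q` but does not vanish at `x`
  set R := Q - C (Q.eval 0)
  have hR' : R.derivative = Q.derivative := by simp [R]
  have hRdeg : R.natDegree = Q.natDegree := natDegree_sub_C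
  have hRlc : 0 < R.leadingCoeff := by
    rwa [leadingCoeff, hRdeg, coeff_sub, coeff_C, if_neg hdeg.ne', sub_zero]
  have hRx : ¬ R.IsRoot x := by simp [R, IsRoot, hQx.eq_zero, (hpos 0 le_rfl).ne']
  have hcount := (count_roots_derivative_eq_one_and_numRootsAbove_eq hR (hRdeg ▸ hdeg)
    (hR' ▸ hQ'x) hRx).1
  have heven : Even (numRootsAbove Q.derivative x) := by
    have h := neg_one_pow_numRootsAbove_derivative_mul_eval_nonpos hR hRlc (hRdeg ▸ hdeg)
      (hR' ▸ hQ'x)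
    rw [hR'] at h
    simp only [R, eval_sub, eval_C, hQx.eq_zero, zero_sub] at h
    by_contra hodd
    rw [Nat.not_even_iff_odd.1 hodd |>.neg_one_pow] at h
    linarith [hpos 0 le_rfl]
  rw [hR'] at hcount
  have hPcount : (X * Q).roots.count x = Q.roots.count x := by
    simp [roots_mul hP0, hx0]
  have hPabove : numRootsAbove (X * Q) x = numRootsAbove Q x + 1 := by
    simp [numRootsAbove, roots_mul hP0, Multiset.filter_singleton, hxneg, add_comm]
  have hPsplit := card_roots_X_mul_eq_natDegree hQ
  refine ⟨?_, ?_⟩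
  · have := count_roots_eq_count_roots_derivative_add_one hP0 hPx
    have := count_roots_eq_count_roots_derivative_add_one hQ0 hQx
    omega
  · rw [numRootsAbove_derivative_of_isRoot hPsplit hPx, hPabove,
      ← numRootsAbove_derivative_of_isRoot hQ hQx]
    exact heven.add_one

theorem nodup_roots_derivative_X_mul (hQ : Multiset.card Q.roots = Q.natDegree)
    (hR : Multiset.card (Q - C (Q.eval 0)).roots = (Q - C (Q.eval 0)).natDegree)
    (hlc : 0 < Q.leadingCoeff) (hdeg : 0 < Q.natDegree) (hpos : ∀ x, 0 ≤ x → 0 < Q.eval x) :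
    (X * Q).derivative.roots.Nodup := by
  classical
  refine Multiset.nodup_iff_count_le_one.2 fun x ↦ ?_
  by_cases hx : (X * Q).derivative.IsRoot x
  · by_cases hPx : (X * Q).IsRoot x
    · exact (count_roots_derivative_X_mul_eq_one_and_odd hQ hR hlc hdeg hpos hx hPx).1.le
    · have hQ0 : Q ≠ 0 := leadingCoeff_ne_zero.1 hlc.ne'
      exact (count_roots_derivative_eq_one_and_numRootsAbove_eq
        (card_roots_X_mul_eq_natDegree hQ) (by rw [natDegree_X_mul hQ0]; omega) hx hPx).1.le
  · rw [Multiset.count_eq_zero.2 (hx <| isRoot_of_mem_roots ·)]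
    exact zero_le_one

theorem eval_X_mul_neg_of_even (hQ : Multiset.card Q.roots = Q.natDegree)
    (hR : Multiset.card (Q - C (Q.eval 0)).roots = (Q - C (Q.eval 0)).natDegree)
    (hlc : 0 < Q.leadingCoeff) (hdeg : 0 < Q.natDegree) (hpos : ∀ x, 0 ≤ x → 0 < Q.eval x)
    {x : ℝ} (hx : (X * Q).derivative.IsRoot x)
    (heven : Even (numRootsAbove (X * Q).derivative x)) :
    (X * Q).eval x < 0 := by
  have hPx : ¬ (X * Q).IsRoot x := fun hPx ↦ Nat.not_even_iff_odd.2
    (count_roots_derivative_X_mul_eq_one_and_odd hQ hR hlc hdeg hpos hx hPx).2 heven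
  have hQ0 : Q ≠ 0 := leadingCoeff_ne_zero.1 hlc.ne'
  have h := neg_one_pow_numRootsAbove_derivative_mul_eval_nonpos
    (card_roots_X_mul_eq_natDegree hQ) (by simpa using hlc) (by rw [natDegree_X_mul hQ0]; omega) hx
  rw [heven.neg_one_pow, one_mul] at h
  exact h.lt_of_ne hPx

end Polynomial

theorem hyperbolic_iff_card_roots_eq_natDegree {f : ℝ[X]} (hf : f ≠ 0) :
    Hyperbolic f ↔ Multiset.card f.roots = f.natDegree := by
  classical
  have hinj : Function.Injective (algebraMap ℝ ℂ) := (algebraMap ℝ ℂ).injective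
  have hroots : ∀ z : ℂ, z ∈ (f.map (algebraMap ℝ ℂ)).roots ↔ aeval z f = 0 := fun _ ↦ by
    rw [mem_roots_map_of_injective hinj hf, aeval_def]
  constructor
  · intro h
    have hall : ∀ z ∈ (f.map (algebraMap ℝ ℂ)).roots, z ∈ (algebraMap ℝ ℂ).range :=
      fun z hz ↦ ⟨z.re, Complex.ext (by simp) (by simp [h z ((hroots z).1 hz)])⟩
    rw [← IsAlgClosed.card_roots_map_eq_natDegree_of_injective f hinj,
      ← Multiset.filter_eq_self.2 hall, filter_roots_map_range_eq_map_roots hinj,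
      Multiset.card_map]
  · intro h z hz
    rw [← hroots, ← roots_map_of_injective_of_card_eq_natDegree hinj h] at hz
    obtain ⟨r, -, rfl⟩ := Multiset.mem_map.1 hz
    simp

theorem hyperbolic_reflect_iff {p : ℝ[X]} {N : ℕ} (hp : p.natDegree ≤ N) :
    Hyperbolic (p.reflect N) ↔ Hyperbolic p := by
  have key : ∀ z : ℂ, z ≠ 0 → (aeval z (p.reflect N) = 0 ↔ aeval z⁻¹ p = 0) :=
      fun z hz ↦ by
    let := invertibleOfNonzero (inv_ne_zero hz)
    simpa [aeval_def] using eval₂_reflect_eq_zero_iff (algebraMap ℝ ℂ) z⁻¹ N p hp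
  have him : ∀ z : ℂ, z⁻¹.im = 0 ↔ z.im = 0 := fun z ↦ by
    rcases eq_or_ne z 0 with rfl | hz
    · simp
    simp [Complex.inv_im, hz]
  constructor
  · intro h z hz
    rcases eq_or_ne z 0 with rfl | hz0
    · simp
    rw [← inv_inv z] at hz
    exact (him z).1 (h z⁻¹ ((key _ (inv_ne_zero hz0)).2 hz))
  · intro h z hz
    rcases eq_or_ne z 0 with rfl | hz0
    · simp
    exact (him z).1 (h _ ((key z hz0).1 hz))

theorem Polynomial.eval_pos_of_coeff_nonneg {p : ℝ[X]} (h0 : 0 < p.coeff 0)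
    (hp : ∀ i, 0 ≤ p.coeff i) {x : ℝ} (hx : 0 ≤ x) : 0 < p.eval x := by
  rw [eval_eq_sum_range]
  exact Finset.sum_pos' (fun i _ ↦ mul_nonneg (hp i) (pow_nonneg hx i))
    ⟨0, Finset.mem_range.2 (Nat.succ_pos _), by simpa using h0⟩

theorem hyperbolic_C {c : ℝ} (hc : c ≠ 0) : Hyperbolic (C c) := fun z hz ↦ by
  simp [hc] at hz

section Sections

variable (a : ℕ → ℝ) (m : ℕ)

theorem sect_succ : sect a (m + 1) = sect a m + C (a (m + 1)) * X ^ (m + 1) :=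
  Finset.sum_range_succ _ _

theorem coeff_sect (j : ℕ) : (sect a m).coeff j = if j ≤ m then a j else 0 := by
  simp [sect, finsetSum_coeff, coeff_C_mul, coeff_X_pow]

theorem natDegree_sect_le : (sect a m).natDegree ≤ m :=
  natDegree_le_iff_coeff_eq_zero.2 fun j hj ↦ by
    rw [coeff_sect, if_neg (by exact_mod_cast hj.not_ge)]

theorem coeff_reflect_sect (i : ℕ) :
    ((sect a m).reflect m).coeff i = if i ≤ m then a (m - i) else 0 := by
  rw [coeff_reflect, coeff_sect]
  split_ifs with h₁ h₂ h₂
  · rw [revAt_le h₂]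
  · rw [revAt_eq_self_of_lt (not_le.1 h₂)] at h₁; omega
  · rw [revAt_le h₂] at h₁; omega
  · rfl

theorem natDegree_reflect_sect (ha : a 0 ≠ 0) : ((sect a m).reflect m).natDegree = m :=
  natDegree_eq_of_le_of_coeff_ne_zero
    (natDegree_le_iff_coeff_eq_zero.2 fun i hi ↦ by
      rw [coeff_reflect_sect, if_neg (by exact_mod_cast hi.not_ge)])
    (by rwa [coeff_reflect_sect, if_pos le_rfl, Nat.sub_self])

theorem leadingCoeff_reflect_sect (ha : a 0 ≠ 0) :
    ((sect a m).reflect m).leadingCoeff = a 0 := by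
  rw [leadingCoeff, natDegree_reflect_sect a m ha, coeff_reflect_sect, if_pos le_rfl, Nat.sub_self]

theorem eval_reflect_sect_pos (ha : ∀ i ≤ m, 0 < a i) {x : ℝ} (hx : 0 ≤ x) :
    0 < ((sect a m).reflect m).eval x := by
  refine eval_pos_of_coeff_nonneg ?_ (fun i ↦ ?_) hx
  · rw [coeff_reflect_sect, if_pos (Nat.zero_le _), Nat.sub_zero]
    exact ha m le_rfl
  · rw [coeff_reflect_sect]
    split_ifs
    exacts [(ha _ (Nat.sub_le m i)).le, le_rfl]

theorem reflect_sect_succ_sub_C :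
    (sect a (m + 1)).reflect (m + 1) - C (((sect a (m + 1)).reflect (m + 1)).eval 0) =
      (sect a m).reflect (m + 1) := by
  rw [← coeff_zero_eq_eval_zero, coeff_reflect_sect, if_pos (Nat.zero_le _), Nat.sub_zero,
    sect_succ, reflect_add, reflect_C_mul_X_pow, revAt_le le_rfl, Nat.sub_self, pow_zero, mul_one,
    add_sub_cancel_right]

theorem reflect_sect_add_C_mul_X_pow (A : ℝ) :
    (sect a m + C A * X ^ (m + 1)).reflect (m + 1) = X * (sect a m).reflect m + C A := by
  have h := reflect_mul (sect a m) 1 (natDegree_sect_le a m) (natDegree_one.trans_le zero_le_one)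
  rw [mul_one, reflect_one, pow_one] at h
  rw [reflect_add, h, reflect_C_mul_X_pow, revAt_le le_rfl, Nat.sub_self, pow_zero, mul_one,
    mul_comm]

theorem hyperbolic_sect_add_C_mul_X_pow_iff (A : ℝ) :
    Hyperbolic (sect a m + C A * X ^ (m + 1)) ↔ Hyperbolic (X * (sect a m).reflect m + C A) := by
  rw [← reflect_sect_add_C_mul_X_pow, hyperbolic_reflect_iff (natDegree_add_le_of_degree_le
    ((natDegree_sect_le a m).trans m.le_succ) (natDegree_C_mul_X_pow_le A (m + 1)))]

end Sections

theorem sect_ne_zero {a : ℕ → ℝ} (ha : a 0 ≠ 0) (m : ℕ) : sect a m ≠ 0 := fun h ↦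
  ha (by simpa [coeff_sect] using congrArg (coeff · 0) h)

theorem SectionHyperbolic.hyperbolic_sect {a : ℕ → ℝ} {m i : ℕ} (h : SectionHyperbolic a m)
    (hi : i ≤ m) : Hyperbolic (sect a i) := by
  rcases Nat.eq_zero_or_pos i with rfl | hi₀
  · rw [sect, Finset.sum_range_one, pow_zero, mul_one]
    exact hyperbolic_C (h.1 0 (Nat.zero_le _)).ne'
  · exact h.2 i hi₀ hi

theorem SectionHyperbolic.exists_pos_isGreatest {a : ℕ → ℝ} {k : ℕ}
    (h : SectionHyperbolic a (k + 1)) :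
    ∃ A, 0 < A ∧ IsGreatest
      {c | Multiset.card (X * (sect a (k + 1)).reflect (k + 1) + C c).roots =
        (X * (sect a (k + 1)).reflect (k + 1) + C c).natDegree} A := by
  set Q := (sect a (k + 1)).reflect (k + 1)
  have ha₀ : a 0 ≠ 0 := (h.1 0 (Nat.zero_le _)).ne'
  have hdeg : Q.natDegree = k + 1 := natDegree_reflect_sect a _ ha₀
  have hlc : 0 < Q.leadingCoeff := leadingCoeff_reflect_sect a _ ha₀ ▸ h.1 0 (Nat.zero_le _)
  have hQ₀ : Q ≠ 0 := leadingCoeff_ne_zero.1 hlc.ne'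
  have hQ : Multiset.card Q.roots = Q.natDegree :=
    (hyperbolic_iff_card_roots_eq_natDegree hQ₀).1
      ((hyperbolic_reflect_iff (natDegree_sect_le a _)).2 (h.hyperbolic_sect le_rfl))
  have hR : Multiset.card (Q - C (Q.eval 0)).roots = (Q - C (Q.eval 0)).natDegree := by
    rw [reflect_sect_succ_sub_C]
    refine (hyperbolic_iff_card_roots_eq_natDegree
      (reflect_eq_zero_iff.not.2 (sect_ne_zero ha₀ k))).1 ?_
    exact      ((hyperbolic_reflect_iff ((natDegree_sect_le a k).trans k.le_succ)).2
        (h.hyperbolic_sect k.le_succ))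
  have hpos : ∀ x, 0 ≤ x → 0 < Q.eval x := fun x ↦ eval_reflect_sect_pos a (k + 1) h.1
  exact exists_pos_isGreatest_card_roots_add_C (card_roots_X_mul_eq_natDegree hQ)
    (by simpa using hlc) (by rw [natDegree_X_mul hQ₀]; omega)
    (nodup_roots_derivative_X_mul hQ hR hlc (by omega) hpos)
    (fun x hx ↦ eval_X_mul_neg_of_even hQ hR hlc (by omega) hpos hx)

/-- For a section-hyperbolic polynomial `p` of degree `n-1` (with `n ≥ 2`), the set of `A > 0`
such that `p(x) + A x^n` is hyperbolic is nonempty and has a greatest element. -/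
theorem stmt2 (n : ℕ) (hn : 2 ≤ n) (a : ℕ → ℝ) (h : SectionHyperbolic a (n - 1)) :
    {A : ℝ | 0 < A ∧ Hyperbolic (sect a (n - 1) + Polynomial.C A * Polynomial.X ^ n)}.Nonempty ∧
    ∃ Amax ∈ {A : ℝ | 0 < A ∧ Hyperbolic (sect a (n - 1) + Polynomial.C A * Polynomial.X ^ n)},
      ∀ B ∈ {A : ℝ | 0 < A ∧ Hyperbolic (sect a (n - 1) + Polynomial.C A * Polynomial.X ^ n)},
        B ≤ Amax := by
  obtain ⟨k, rfl⟩ : ∃ k, n = k + 2 := ⟨n - 2, by omega⟩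
  obtain ⟨A, hA, hAmem, hAmax⟩ := SectionHyperbolic.exists_pos_isGreatest h
  have hQ₀ : (sect a (k + 1)).reflect (k + 1) ≠ 0 :=
    reflect_eq_zero_iff.not.2 (sect_ne_zero (h.1 0 (Nat.zero_le _)).ne' (k + 1))
  have hiff : ∀ c, Hyperbolic (sect a (k + 1) + C c * X ^ (k + 2)) ↔
      Multiset.card (X * (sect a (k + 1)).reflect (k + 1) + C c).roots =
        (X * (sect a (k + 1)).reflect (k + 1) + C c).natDegree := fun c ↦
    (hyperbolic_sect_add_C_mul_X_pow_iff a (k + 1) c).trans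
      (hyperbolic_iff_card_roots_eq_natDegree fun h₀ ↦ by
        simpa [natDegree_X_mul hQ₀] using congrArg natDegree h₀)
  exact ⟨⟨A, hA, (hiff A).2 hAmem⟩, A, ⟨hA, (hiff A).2 hAmem⟩,
    fun B hB ↦ hAmax ((hiff B).1 hB.2)⟩
end

section
/- For every real q ∈ (0,1) there exists a natural number m such that for all n ≥ 2m+2 the polynomial S_n(q,x) = Σ_{k=0}^n q^{k^2} x^k has at most 2m+2 non-real complex roots counted with multiplicity (equivalently, at least n − 2m − 2 of its roots are real). -/
/-!
At `x_j = -q^{-2j}` completing the square gives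
`(-1)^j q^{j²} S_n(q, x_j) = ∑_{i=-j}^{n-j} (-1)^i q^{i²}`, a window of the theta series
`θ(q) = ∑_{i ∈ ℤ} (-1)^i q^{i²}`. Jacobi's transformation (Poisson summation) writes
`θ(e^{-πt})` as `t^{-1/2} ∑_i e^{-π(i-1/2)²/t} > 0`, so every window containing `[-m, m]` has
positive sum once `m` is large. Hence `S_n` alternates in sign at `x_m > x_{m+1} > ⋯ > x_{n-m}`,
has at least `n - 2m` real roots, and so at most `2m` non-real ones.
-/

open Polynomial Real

noncomputable def altThetaTerm (q : ℝ) (n : ℤ) : ℝ := (-1) ^ n.natAbs * q ^ n.natAbs ^ 2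

lemma altThetaTerm_exp (t : ℝ) (n : ℤ) :
    altThetaTerm (rexp (-π * t)) n = (-1) ^ n.natAbs * rexp (-π * t * n ^ 2) := by
  rw [altThetaTerm, ← Real.exp_nat_mul, Nat.cast_pow, Nat.cast_natAbs, Int.cast_abs, sq_abs,
    mul_comm ((n : ℝ) ^ 2)]

lemma cexp_pi_mul_I_mul_intCast (n : ℤ) : Complex.exp (π * Complex.I * n) = (-1) ^ n.natAbs := by
  rw [mul_comm, Complex.exp_int_mul, Complex.exp_pi_mul_I, neg_one_zpow_eq_ite, neg_one_pow_eq_ite]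
  simp only [Int.natAbs_even]

lemma tsum_altThetaTerm_exp {t : ℝ} (ht : 0 < t) :
    ∑' n, altThetaTerm (rexp (-π * t)) n =
      1 / t ^ (1 / 2 : ℝ) * ∑' n : ℤ, rexp (-π / t * (n - 1 / 2) ^ 2) := by
  have h := Complex.tsum_exp_neg_quadratic (a := t) (by simpa using ht) (Complex.I / 2)
  apply Complex.ofReal_injective
  push_cast [Complex.ofReal_tsum, altThetaTerm_exp, Complex.ofReal_cpow ht.le]
  convert h using 3 with n n
  · rw [Complex.exp_add, mul_comm (Complex.exp _)]
    congr 1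
    rw [← cexp_pi_mul_I_mul_intCast]
    congr 1
    ring
  · funext n
    rw [← mul_div_assoc, Complex.I_mul_I]
    congr 1
    ring

lemma summable_altThetaTerm_exp {t : ℝ} (ht : 0 < t) :
    Summable (altThetaTerm (rexp (-π * t))) := by
  refine (HurwitzKernelBounds.summable_f_int 0 0 ht).of_norm_bounded (fun n => ?_)
  rw [altThetaTerm_exp, norm_mul, norm_pow, norm_neg, norm_one, one_pow, one_mul, norm_of_nonneg
    (exp_pos _).le, HurwitzKernelBounds.f_int]
  simp [mul_right_comm]

lemma tsum_altThetaTerm_exp_pos {t : ℝ} (ht : 0 < t) :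
    0 < ∑' n, altThetaTerm (rexp (-π * t)) n := by
  have hs : Summable fun n : ℤ => rexp (-π / t * (n - 1 / 2) ^ 2) :=
    (HurwitzKernelBounds.summable_f_int 0 (-1 / 2) (inv_pos.2 ht)).congr fun n => by
      simp only [HurwitzKernelBounds.f_int, pow_zero, one_mul]
      ring_nf
  rw [tsum_altThetaTerm_exp ht]
  exact mul_pos (by positivity) (hs.tsum_pos (fun _ => (exp_pos _).le) 0 (exp_pos _))

lemma HasSum.exists_forall_Icc_subset_sum_pos {f : ℤ → ℝ} {a : ℝ} (hf : HasSum f a)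
    (ha : 0 < a) :
    ∃ m : ℕ, ∀ s : Finset ℤ, Finset.Icc (-(m : ℤ)) m ⊆ s → 0 < ∑ i ∈ s, f i := by
  obtain ⟨s₀, hs₀⟩ := Filter.eventually_atTop.1 (hf.eventually (lt_mem_nhds ha))
  refine ⟨s₀.sup Int.natAbs, fun s hs => hs₀ s (subset_trans (fun i hi => ?_) hs)⟩
  have := Finset.le_sup (f := Int.natAbs) hi
  rw [Finset.mem_Icc]
  omega

lemma exists_forall_Icc_subset_sum_altThetaTerm_pos {q : ℝ} (hq0 : 0 < q) (hq1 : q < 1) :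
    ∃ m : ℕ, ∀ s : Finset ℤ, Finset.Icc (-(m : ℤ)) m ⊆ s →
      0 < ∑ i ∈ s, altThetaTerm q i := by
  obtain ⟨t, ht, rfl⟩ : ∃ t, 0 < t ∧ rexp (-π * t) = q :=
    ⟨-log q / π, div_pos (neg_pos.2 (log_neg hq0 hq1)) pi_pos, by
      rw [show -π * (-log q / π) = log q by field_simp, exp_log hq0]⟩
  exact (summable_altThetaTerm_exp ht).hasSum.exists_forall_Icc_subset_sum_pos
    (tsum_altThetaTerm_exp_pos ht)

section Semiring

variable {R : Type*} [Semiring R]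

noncomputable def thetaSection (q : R) (n : ℕ) : R[X] :=
  ∑ k ∈ Finset.range (n + 1), C (q ^ k ^ 2) * X ^ k

lemma thetaSection_map {S : Type*} [Semiring S] (f : R →+* S) (q : R) (n : ℕ) :
    (thetaSection q n).map f = thetaSection (f q) n := by
  simp [thetaSection, Polynomial.map_sum]

lemma natDegree_thetaSection_le (q : R) (n : ℕ) :
    (thetaSection q n).natDegree ≤ n :=
  natDegree_sum_le_of_forall_le _ _ fun k hk =>
    (natDegree_C_mul_X_pow_le _ k).trans (Nat.lt_succ_iff.1 (Finset.mem_range.1 hk))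

end Semiring

lemma altThetaTerm_natCast_sub {q : ℝ} (hq : q ≠ 0) (j k : ℕ) :
    altThetaTerm q ((k : ℤ) - j) =
      (-1) ^ j * q ^ j ^ 2 * (q ^ k ^ 2 * (-(q ^ (2 * j))⁻¹) ^ k) := by
  set d := ((k : ℤ) - j).natAbs with hd
  have hpar : d + 2 * min j k = j + k := by omega
  have hsq : d ^ 2 + 2 * j * k = j ^ 2 + k ^ 2 := by
    zify
    rw [hd, Int.natCast_natAbs, sq_abs]
    ring
  have hsign : (-1 : ℝ) ^ j * (-1) ^ k = (-1) ^ d := by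
    rw [← pow_add, ← hpar, pow_add, pow_mul]
    simp
  have hpow : q ^ j ^ 2 * q ^ k ^ 2 = q ^ d ^ 2 * q ^ (2 * j * k) := by
    rw [← pow_add, ← pow_add, hsq]
  rw [altThetaTerm, neg_pow (q ^ (2 * j))⁻¹, inv_pow, ← pow_mul]
  field_simp
  linear_combination -(q ^ j ^ 2 * q ^ k ^ 2) * hsign - (-1) ^ d * hpow

lemma neg_one_pow_mul_eval_thetaSection {q : ℝ} (hq : q ≠ 0) (j n : ℕ) :
    (-1) ^ j * q ^ j ^ 2 * (thetaSection q n).eval (-(q ^ (2 * j))⁻¹) =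
      ∑ i ∈ Finset.Icc (-(j : ℤ)) ((n : ℤ) - j), altThetaTerm q i := by
  rw [thetaSection, eval_finsetSum, Finset.mul_sum]
  refine Finset.sum_nbij' (fun k => (k : ℤ) - j) (fun i => (i + j).toNat) ?_ ?_ ?_ ?_ ?_ <;>
    intro a ha <;> simp only [Finset.mem_range, Finset.mem_Icc] at ha ⊢
  · omega
  · omega
  · omega
  · omega
  · simp [altThetaTerm_natCast_sub hq]

lemma exists_mem_Ioo_eq_zero_of_mul_neg {f : ℝ → ℝ} {a b : ℝ} (hab : a ≤ b)
    (hf : ContinuousOn f (Set.Icc a b)) (h : f a * f b < 0) : ∃ c ∈ Set.Ioo a b, f c = 0 := by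
  rw [← Set.uIcc_of_le hab] at hf
  obtain ⟨c, hc, hfc⟩ : (0 : ℝ) ∈ f '' Set.uIcc a b := by
    refine intermediate_value_uIcc hf (Set.mem_uIcc.2 ?_)
    rcases mul_neg_iff.1 h with h | h
    · exact Or.inr ⟨h.2.le, h.1.le⟩
    · exact Or.inl ⟨h.1.le, h.2.le⟩
  rw [Set.uIcc_of_le hab] at hc
  refine ⟨c, ⟨lt_of_le_of_ne hc.1 ?_, lt_of_le_of_ne hc.2 ?_⟩, hfc⟩ <;>
    rintro rfl <;> simp [hfc] at h

lemma le_card_roots_of_alternating {p : ℝ[X]} {x : ℕ → ℝ} (hx : StrictAnti x) {a b : ℕ}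
    (h : ∀ j ∈ Finset.Icc a b, 0 < (-1) ^ j * p.eval (x j)) : b - a ≤ p.roots.card := by
  have hroot : ∀ j ∈ Finset.Ico a b, ∃ r ∈ Set.Ioo (x (j + 1)) (x j), p.IsRoot r := by
    intro j hj
    rw [Finset.mem_Ico] at hj
    have h₀ := h j (Finset.mem_Icc.2 ⟨hj.1, hj.2.le⟩)
    have h₁ := h (j + 1) (Finset.mem_Icc.2 ⟨by omega, hj.2⟩)
    refine exists_mem_Ioo_eq_zero_of_mul_neg (hx j.lt_succ_self).le p.continuousOn ?_
    rw [pow_succ] at h₁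
    nlinarith [mul_pos h₀ h₁, pow_mul_pow_eq_one (n := j) (by norm_num : (-1 : ℝ) * -1 = 1)]
  choose! r hr hpr using hroot
  have hr_anti : StrictAntiOn r (Finset.Ico a b) := fun i hi j hj hij =>
    calc r j < x j := (hr j hj).2
      _ ≤ x (i + 1) := hx.antitone hij
      _ < r i := (hr i hi).1
  calc b - a = ((Finset.Ico a b).image r).card := by
        rw [Finset.card_image_of_injOn hr_anti.injOn, Nat.card_Ico]
    _ ≤ p.roots.toFinset.card := Finset.card_le_card fun r' hr' => by
        obtain ⟨j, hj, rfl⟩ := Finset.mem_image.1 hr'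
        have hp : p ≠ 0 := by
          rintro rfl
          simpa using h j (Finset.Ico_subset_Icc_self hj)
        exact Multiset.mem_toFinset.2 ((mem_roots hp).2 (hpr j hj))
    _ ≤ p.roots.card := Multiset.toFinset_card_le _

lemma card_roots_filter_im_ne_zero_add_card_roots_le (p : ℝ[X]) :
    ((p.map (algebraMap ℝ ℂ)).roots.filter (fun z : ℂ => z.im ≠ 0)).card + p.roots.card ≤
      p.natDegree := by
  set R := (p.map (algebraMap ℝ ℂ)).roots
  have hreal : p.roots.map (algebraMap ℝ ℂ) ≤ R.filter (fun z : ℂ => ¬z.im ≠ 0) :=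
    Multiset.le_filter.2 ⟨map_roots_le_of_injective p (algebraMap ℝ ℂ).injective, by
      rintro _ hz
      obtain ⟨x, -, rfl⟩ := Multiset.mem_map.1 hz
      simp⟩
  calc (R.filter (fun z : ℂ => z.im ≠ 0)).card + p.roots.card
      ≤ (R.filter (fun z : ℂ => z.im ≠ 0)).card +
          (R.filter (fun z : ℂ => ¬z.im ≠ 0)).card := by
        simpa using Multiset.card_le_card hreal
    _ = R.card := by rw [← Multiset.card_add, Multiset.filter_add_not]
    _ ≤ p.natDegree := (card_roots' _).trans (natDegree_map _).le

lemma exists_le_card_roots_thetaSection {q : ℝ} (hq0 : 0 < q) (hq1 : q < 1) :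
    ∃ m : ℕ, ∀ n : ℕ, n - 2 * m ≤ (thetaSection q n).roots.card := by
  obtain ⟨m, hm⟩ := exists_forall_Icc_subset_sum_altThetaTerm_pos hq0 hq1
  refine ⟨m, fun n => ?_⟩
  have hx : StrictAnti fun j : ℕ => -(q ^ (2 * j))⁻¹ := fun i j hij =>
    neg_lt_neg_iff.2 <| inv_strictAnti₀ (pow_pos hq0 _) <|
      pow_lt_pow_right_of_lt_one₀ hq0 hq1 (by omega : 2 * i < 2 * j)
  have hsign : ∀ j ∈ Finset.Icc m (n - m),
      0 < (-1) ^ j * (thetaSection q n).eval (-(q ^ (2 * j))⁻¹) := by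
    intro j hj
    rw [Finset.mem_Icc] at hj
    have h := neg_one_pow_mul_eval_thetaSection hq0.ne' j n
    rw [mul_right_comm] at h
    exact pos_of_mul_pos_left (h ▸ hm _ (Finset.Icc_subset_Icc (by omega) (by omega)))
      (pow_pos hq0 _).le
  have := le_card_roots_of_alternating hx hsign
  omega

/-- For every `q ∈ (0,1)` there is `m` such that for all `n ≥ 2m+2` the section
`S_n(q,x) = Σ_{k=0}^n q^{k²} x^k` has at most `2m+2` non-real roots counted with
multiplicity. -/
theorem stmt16 (q : ℝ) (hq : q ∈ Set.Ioo (0 : ℝ) 1) :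
    ∃ m : ℕ, ∀ n : ℕ, 2 * m + 2 ≤ n →
      (((∑ k ∈ Finset.range (n + 1),
            Polynomial.C ((q : ℂ) ^ (k ^ 2)) * Polynomial.X ^ k).roots.filter
          (fun z : ℂ => z.im ≠ 0)).card ≤ 2 * m + 2) := by
  obtain ⟨m, hm⟩ := exists_le_card_roots_thetaSection hq.1 hq.2
  refine ⟨m, fun n _ => ?_⟩
  have hcount := card_roots_filter_im_ne_zero_add_card_roots_le (thetaSection q n)
  rw [thetaSection_map, Complex.coe_algebraMap] at hcount
  have hreal := hm n
  have hdeg := natDegree_thetaSection_le q n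
  change ((thetaSection (q : ℂ) n).roots.filter (fun z : ℂ => z.im ≠ 0)).card ≤ 2 * m + 2
  omega
end
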